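/- Validity of the time-indexed synchronization cut: let visits u and v each be started exactly once, with u started at time t_u and v at time t_v, encoded by indicator families (X_{u^t})_t and (X_{v^t})_t with Σ_t X_{u^t} = 1, X_{u^{t_u}} = 1, Σ_t X_{v^t} = 1, X_{v^{t_v}} = 1, and let p ∈ {0,1} indicate t_u ≤ t_v. Then the family of constraints p + X_{u^t} + Σ_{ℓ ∉ [t + δ^min, t + δ^max]} X_{v^ℓ} ≤ 2 for all t holds for all t if and only if (p = 1 implies t_v ∈ [t_u + δ^min, t_u + δ^max]). -/

import Mathlib

/-! A start-time indicator family `X` with `∑ X = 1` and `X t₀ = 1` is the point mass at `t₀`, so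
the left side of the cut at time `t` is `p + [t = t_u] + [t_v ∉ [t + δ^min, t + δ^max]]`. This
exceeds `2` only at `t = t_u`, and there exactly when `p = 1` and `t_v` leaves the window. -/

open Finset

theorem Finset.sum_subset_eq_ite_of_sum_eq_one {ι : Type*} [DecidableEq ι] {T S : Finset ι}
    {f : ι → ℕ} {a : ι} (hS : S ⊆ T) (haT : a ∈ T) (hsum : ∑ x ∈ T, f x = 1) (ha : f a = 1) :
    ∑ x ∈ S, f x = if a ∈ S then 1 else 0 := by
  split_ifs with haS
  · have hle : ∑ x ∈ S, f x ≤ 1 := hsum ▸ sum_le_sum_of_subset hS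
    have hge : f a ≤ ∑ x ∈ S, f x := single_le_sum (fun _ _ ↦ Nat.zero_le _) haS
    omega
  · have hrest : ∑ x ∈ T.erase a, f x = 0 := by
      have := add_sum_erase T f haT
      omega
    have hSrest : S ⊆ T.erase a := fun x hx ↦ mem_erase.2 ⟨fun h ↦ haS (h ▸ hx), hS hx⟩
    exact Nat.eq_zero_of_le_zero (hrest ▸ sum_le_sum_of_subset hSrest)

theorem time_indexed_sync_cut_valid_general
    (T : Finset ℤ) (Xu Xv : ℤ → ℕ) (tu tv : ℤ) (p : ℕ) (δmin δmax : ℤ)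
    (hp : p = 0 ∨ p = 1)
    (htu : tu ∈ T) (htv : tv ∈ T)
    (hXu1 : ∑ t ∈ T, Xu t = 1) (hXutu : Xu tu = 1)
    (hXv1 : ∑ t ∈ T, Xv t = 1) (hXvtv : Xv tv = 1) :
    ((∀ t ∈ T,
        p + Xu t +
          ∑ ℓ ∈ T.filter (fun ℓ => ℓ < t + δmin ∨ t + δmax < ℓ), Xv ℓ ≤ 2) ↔
      (p = 1 → tu + δmin ≤ tv ∧ tv ≤ tu + δmax)) := by
  have hXu : ∀ t ∈ T, Xu t = if tu = t then 1 else 0 := fun t ht ↦ by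
    simpa using sum_subset_eq_ite_of_sum_eq_one (singleton_subset_iff.2 ht) htu hXu1 hXutu
  have hXv : ∀ t, ∑ ℓ ∈ T.filter (fun ℓ => ℓ < t + δmin ∨ t + δmax < ℓ), Xv ℓ =
      if tv < t + δmin ∨ t + δmax < tv then 1 else 0 := fun t ↦ by
    simpa [htv] using sum_subset_eq_ite_of_sum_eq_one
      (filter_subset (fun ℓ => ℓ < t + δmin ∨ t + δmax < ℓ) T) htv hXv1 hXvtv
  simp only [hXv]
  constructor
  · intro hcut hp1
    have := hcut tu htu
    rw [hXutu] at this
    split_ifs at this <;> omega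
  · intro hwin t ht
    rw [hXu t ht]
    split_ifs <;> omega

/-- Validity of the time-indexed synchronization cut. -/
theorem time_indexed_sync_cut_valid
    (T : Finset ℤ) (Xu Xv : ℤ → ℕ) (tu tv : ℤ) (p : ℕ) (δmin δmax : ℤ)
    (hδ : δmin ≤ δmax) (hp : p = 0 ∨ p = 1)
    (htu : tu ∈ T) (htv : tv ∈ T)
    (hXu1 : ∑ t ∈ T, Xu t = 1) (hXutu : Xu tu = 1)
    (hXv1 : ∑ t ∈ T, Xv t = 1) (hXvtv : Xv tv = 1)
    (hpsem : p = 1 ↔ tu ≤ tv) :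
    ((∀ t ∈ T,
        p + Xu t +
          ∑ ℓ ∈ T.filter (fun ℓ => ℓ < t + δmin ∨ t + δmax < ℓ), Xv ℓ ≤ 2) ↔
      (p = 1 → tu + δmin ≤ tv ∧ tv ≤ tu + δmax)) :=
  time_indexed_sync_cut_valid_general T Xu Xv tu tv p δmin δmax hp htu htv hXu1 hXutu hXv1 hXvtv
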